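/- Let F be a formula provable in CL5⁻ with n positive occurrences of atoms. Then no CL5⁻ proof of F contains a cirquent with more than n ogroups. -/

import Mathlib

namespace CirquentCalc

/-- Formulas: literals (negation applied only to atoms), ∧, ∨. -/
inductive Fml where
  | pos : ℕ → Fml
  | neg : ℕ → Fml
  | and : Fml → Fml → Fml
  | or : Fml → Fml → Fml
deriving DecidableEq

namespace Fml

/-- Negation (pushed to atoms, as ¬ applies only to atoms). -/
def negate : Fml → Fml
  | pos n => neg n
  | neg n => pos n
  | and a b => or a.negate b.negate
  | or a b => and a.negate b.negate

/-- Substitution extended homomorphically. -/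
def subst (σ : ℕ → Fml) : Fml → Fml
  | pos n => σ n
  | neg n => (σ n).negate
  | and a b => and (a.subst σ) (b.subst σ)
  | or a b => or (a.subst σ) (b.subst σ)

/-- Classical evaluation under a truth assignment. -/
def eval (v : ℕ → Bool) : Fml → Bool
  | pos n => v n
  | neg n => !(v n)
  | and a b => a.eval v && b.eval v
  | or a b => a.eval v || b.eval v

/-- Number of positive occurrences of atom `a`. -/
def cPos (a : ℕ) : Fml → ℕ
  | pos n => if n = a then 1 else 0
  | neg _ => 0
  | and f g => f.cPos a + g.cPos a
  | or f g => f.cPos a + g.cPos a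

/-- Number of negative occurrences of atom `a`. -/
def cNeg (a : ℕ) : Fml → ℕ
  | pos _ => 0
  | neg n => if n = a then 1 else 0
  | and f g => f.cNeg a + g.cNeg a
  | or f g => f.cNeg a + g.cNeg a

/-- Total number of positive occurrences of atoms. -/
def posOcc : Fml → ℕ
  | pos _ => 1
  | neg _ => 0
  | and f g => f.posOcc + g.posOcc
  | or f g => f.posOcc + g.posOcc

/-- Length: total number of occurrences of literals and connectives. -/
def len : Fml → ℕ
  | pos _ => 1
  | neg _ => 1
  | and f g => f.len + g.len + 1
  | or f g => f.len + g.len + 1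

/-- Number of occurrences of ∧. -/
def nAnd : Fml → ℕ
  | pos _ => 0
  | neg _ => 0
  | and f g => f.nAnd + g.nAnd + 1
  | or f g => f.nAnd + g.nAnd

/-- Number of occurrences of ∨. -/
def nOr : Fml → ℕ
  | pos _ => 0
  | neg _ => 0
  | and f g => f.nOr + g.nOr
  | or f g => f.nOr + g.nOr + 1

end Fml

def Tautology (A : Fml) : Prop := ∀ v, A.eval v = true

/-- No atom has more than two occurrences. -/
def Binary (A : Fml) : Prop := ∀ a, A.cPos a + A.cNeg a ≤ 2

/-- Whenever an atom occurs twice, one occurrence is positive and one negative. -/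
def Normal (A : Fml) : Prop := ∀ a, A.cPos a ≤ 1 ∧ A.cNeg a ≤ 1

def AtomicLevel (σ : ℕ → Fml) : Prop := ∀ n, ∃ m, σ n = Fml.pos m

/-- `F` is an instance of `B`: σ(B) = F for some substitution σ. -/
def InstanceOf (F B : Fml) : Prop := ∃ σ, B.subst σ = F

/-- `F` is an atomic-level instance of `B`. -/
def AtomicInstanceOf (F B : Fml) : Prop := ∃ σ, AtomicLevel σ ∧ B.subst σ = F

/-- A cirquent: a pool of (occurrences of) formulas, and a list of ogroups,
each an (index-)set of oformulas of the pool. -/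
structure Cirquent where
  pool : List Fml
  groups : List (Finset ℕ)

def emptyCirquent : Cirquent := ⟨[], []⟩

def idCirquent (F : Fml) : Cirquent := ⟨[F.negate, F], [{0, 1}]⟩

/-- The cirquent with pool ⟨F⟩ and one ogroup containing F. -/
def fmlCirquent (F : Fml) : Cirquent := ⟨[F], [{0}]⟩

/-- Index renaming swapping `i` and `i+1`. -/
def swapIdx (i : ℕ) : ℕ → ℕ := fun j => if j = i then i + 1 else if j = i + 1 then i else j

/-- Index renaming when a new oformula is inserted at position `i`. -/
def insShift (i : ℕ) : ℕ → ℕ := fun j => if j < i then j else j + 1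

/-- Index renaming when the oformulas at positions `i`, `i+1` are merged into one at `i`. -/
def mergeIdx (i : ℕ) : ℕ → ℕ := fun j => if j ≤ i then j else j - 1

/-- Mix: placing the two premise cirquents side by side. -/
def MixStep (A B C : Cirquent) : Prop :=
  C.pool = A.pool ++ B.pool ∧
  C.groups = A.groups ++ B.groups.map (Finset.image (· + A.pool.length))

/-- Oformula exchange: swap two adjacent oformulas, preserving containment. -/
def OfExchStep (P C : Cirquent) : Prop :=
  ∃ (l₁ l₂ : List Fml) (F G : Fml),
    P.pool = l₁ ++ F :: G :: l₂ ∧ C.pool = l₁ ++ G :: F :: l₂ ∧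
    C.groups = P.groups.map (Finset.image (swapIdx l₁.length))

/-- Ogroup exchange: swap two adjacent ogroups. -/
def OgExchStep (P C : Cirquent) : Prop :=
  C.pool = P.pool ∧
  ∃ (g₁ g₂ : List (Finset ℕ)) (Γ Δ : Finset ℕ),
    P.groups = g₁ ++ Γ :: Δ :: g₂ ∧ C.groups = g₁ ++ Δ :: Γ :: g₂

/-- Pool weakening: insert a new oformula, contained in no ogroup. -/
def PoolWeakStep (P C : Cirquent) : Prop :=
  ∃ (l₁ l₂ : List Fml) (F : Fml),
    P.pool = l₁ ++ l₂ ∧ C.pool = l₁ ++ F :: l₂ ∧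
    C.groups = P.groups.map (Finset.image (insShift l₁.length))

/-- Ogroup weakening: add a new arc between a pre-existing ogroup and oformula. -/
def OgWeakStep (P C : Cirquent) : Prop :=
  C.pool = P.pool ∧
  ∃ (g₁ g₂ : List (Finset ℕ)) (Γ : Finset ℕ) (j : ℕ),
    j < P.pool.length ∧ j ∉ Γ ∧
    P.groups = g₁ ++ Γ :: g₂ ∧ C.groups = g₁ ++ insert j Γ :: g₂

/-- Downward duplication: replace an ogroup by two adjacent copies of it. -/
def DupDownStep (P C : Cirquent) : Prop :=
  C.pool = P.pool ∧
  ∃ (g₁ g₂ : List (Finset ℕ)) (Γ : Finset ℕ),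
    P.groups = g₁ ++ Γ :: g₂ ∧ C.groups = g₁ ++ Γ :: Γ :: g₂

/-- Upward duplication: the converse of downward duplication. -/
def DupUpStep (P C : Cirquent) : Prop :=
  C.pool = P.pool ∧
  ∃ (g₁ g₂ : List (Finset ℕ)) (Γ : Finset ℕ),
    P.groups = g₁ ++ Γ :: Γ :: g₂ ∧ C.groups = g₁ ++ Γ :: g₂

/-- ∨-introduction: merge two adjacent oformulas F, G into F ∨ G. -/
def OrIntroStep (P C : Cirquent) : Prop :=
  ∃ (l₁ l₂ : List Fml) (F G : Fml),
    P.pool = l₁ ++ F :: G :: l₂ ∧ C.pool = l₁ ++ (Fml.or F G) :: l₂ ∧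
    C.groups = P.groups.map (Finset.image (mergeIdx l₁.length))

/-- The merging of the ogroup list in ∧-introduction: no ogroup contains both `i`
and `i+1`; every ogroup containing `i` is immediately followed by one containing
`i+1` and vice versa; such pairs are merged. -/
inductive AndMerge (i : ℕ) : List (Finset ℕ) → List (Finset ℕ) → Prop where
  | nil : AndMerge i [] []
  | skip {Γ : Finset ℕ} {l l' : List (Finset ℕ)} :
      i ∉ Γ → (i + 1) ∉ Γ → AndMerge i l l' → AndMerge i (Γ :: l) (Γ :: l')
  | merge {Γ Δ : Finset ℕ} {l l' : List (Finset ℕ)} :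
      i ∈ Γ → (i + 1) ∉ Γ → (i + 1) ∈ Δ → i ∉ Δ →
      AndMerge i l l' → AndMerge i (Γ :: Δ :: l) ((Γ ∪ Δ) :: l')

/-- ∧-introduction. -/
def AndIntroStep (P C : Cirquent) : Prop :=
  ∃ (l₁ l₂ : List Fml) (F G : Fml) (merged : List (Finset ℕ)),
    P.pool = l₁ ++ F :: G :: l₂ ∧ C.pool = l₁ ++ (Fml.and F G) :: l₂ ∧
    AndMerge l₁.length P.groups merged ∧
    C.groups = merged.map (Finset.image (mergeIdx l₁.length))

inductive RuleName where
  | emptyAx | idAx | mix | ofExch | ogExch | poolWeak | ogWeak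
  | dupDown | dupUp | orIntro | andIntro
deriving DecidableEq

/-- The unary (one-premise) rules, by name. -/
def unRel : RuleName → Cirquent → Cirquent → Prop
  | .ofExch => OfExchStep
  | .ogExch => OgExchStep
  | .poolWeak => PoolWeakStep
  | .ogWeak => OgWeakStep
  | .dupDown => DupDownStep
  | .dupUp => DupUpStep
  | .orIntro => OrIntroStep
  | .andIntro => AndIntroStep
  | _ => fun _ _ => False

/-- Proof trees: each node is labeled by its cirquent and the rule used. -/
inductive PTree where
  | leaf (C : Cirquent) (r : RuleName)
  | un (C : Cirquent) (r : RuleName) (p : PTree)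
  | bin (C : Cirquent) (r : RuleName) (p q : PTree)

namespace PTree

def concl : PTree → Cirquent
  | leaf C _ => C
  | un C _ _ => C
  | bin C _ _ _ => C

/-- Validity: each node follows from its children by the named rule. -/
def Valid : PTree → Prop
  | leaf C r =>
      (r = .emptyAx ∧ C = emptyCirquent) ∨ (r = .idAx ∧ ∃ F, C = idCirquent F)
  | un C r p => p.Valid ∧ unRel r p.concl C
  | bin C r p q => p.Valid ∧ q.Valid ∧ r = .mix ∧ MixStep p.concl q.concl C

/-- Number of applications of rule `r` in the proof. -/
def count (r : RuleName) : PTree → ℕ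
  | leaf _ r' => if r' = r then 1 else 0
  | un _ r' p => (if r' = r then 1 else 0) + p.count r
  | bin _ r' p q => (if r' = r then 1 else 0) + p.count r + q.count r

/-- The cirquents occurring in the proof. -/
def cirquents : PTree → List Cirquent
  | leaf C _ => [C]
  | un C _ p => C :: p.cirquents
  | bin C _ p q => C :: (p.cirquents ++ q.cirquents)

/-- Total number of rule applications (nodes). -/
def nodes : PTree → ℕ
  | leaf _ _ => 1
  | un _ _ p => p.nodes + 1
  | bin _ _ p q => p.nodes + q.nodes + 1

/-- Number of leaves of the proof tree. -/
def leavesCount : PTree → ℕ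
  | leaf _ _ => 1
  | un _ _ p => p.leavesCount
  | bin _ _ p q => p.leavesCount + q.leavesCount

end PTree

/-- A proof uses no duplication. -/
def DupFree (p : PTree) : Prop :=
  p.count RuleName.dupDown = 0 ∧ p.count RuleName.dupUp = 0

/-- Provability of a cirquent in CL5. -/
def ProvesC (C : Cirquent) : Prop := ∃ p : PTree, p.Valid ∧ p.concl = C

/-- Provability of a formula in CL5. -/
def ProvesCL5 (F : Fml) : Prop := ∃ p : PTree, p.Valid ∧ p.concl = fmlCirquent F

/-- Provability of a formula in CL5⁻ (CL5 without duplication). -/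
def ProvesCL5m (F : Fml) : Prop :=
  ∃ p : PTree, p.Valid ∧ DupFree p ∧ p.concl = fmlCirquent F

/-- Number of arcs of a cirquent (sum of the sizes of its ogroups). -/
def Cirquent.arcs (C : Cirquent) : ℕ := (C.groups.map Finset.card).sum

/-- Size of a cirquent: sum of the lengths of the oformulas in its pool plus
the sum of the sizes of its ogroups. -/
def Cirquent.size (C : Cirquent) : ℕ := (C.pool.map Fml.len).sum + C.arcs

/-- Size of a proof: the sum of the sizes of the cirquents it contains. -/
def PTree.size (p : PTree) : ℕ := (p.cirquents.map Cirquent.size).sum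

/-- Total number of positive occurrences of atoms in the pool. -/
def Cirquent.poolPosOcc (C : Cirquent) : ℕ := (C.pool.map Fml.posOcc).sum

end CirquentCalc

open CirquentCalc

/-!
Reading a proof downwards, no rule other than downward duplication creates ogroups (mix adds
the ogroup counts of its premises, ∧-introduction merges pairs of them), and no rule destroys
positive occurrences of atoms in the pool (mix adds them, pool weakening only adds). An axiom
has at most as many ogroups as positive occurrences: the identity axiom has one ogroup, and
one of `¬F`, `F` contains a positive atom. Hence every cirquent of a duplication-free proof has
at most as many ogroups as its own pool has positive occurrences, which in turn is at most
the number of positive occurrences in the conclusion.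
-/

namespace CirquentCalc

theorem Fml.one_le_posOcc_add_posOcc_negate (F : Fml) : 1 ≤ F.posOcc + F.negate.posOcc := by
  induction F with
  | pos | neg => simp [Fml.posOcc, Fml.negate]
  | and _ _ | or _ _ => simp only [Fml.posOcc, Fml.negate]; omega

theorem AndMerge.length_le {i : ℕ} {l l' : List (Finset ℕ)} (h : AndMerge i l l') :
    l'.length ≤ l.length := by
  induction h with
  | nil => exact le_rfl
  | skip _ _ _ ih | merge _ _ _ _ _ ih => simp only [List.length_cons]; omega

theorem poolPosOcc_le_of_unRel {r : RuleName} {P C : Cirquent} (h : unRel r P C) :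
    P.poolPosOcc ≤ C.poolPosOcc := by
  cases r <;> simp only [unRel] at h
  case ogExch | ogWeak | dupDown | dupUp => simp only [Cirquent.poolPosOcc, h.1, le_refl]
  case ofExch =>
    obtain ⟨l₁, l₂, F, G, hP, hC, -⟩ := h
    simp only [Cirquent.poolPosOcc, hP, hC, List.map_append, List.map_cons, List.sum_append,
      List.sum_cons]
    omega
  case poolWeak =>
    obtain ⟨l₁, l₂, F, hP, hC, -⟩ := h
    simp [Cirquent.poolPosOcc, hP, hC]
  case orIntro =>
    obtain ⟨l₁, l₂, F, G, hP, hC, -⟩ := h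
    simp only [Cirquent.poolPosOcc, hP, hC, List.map_append, List.map_cons, List.sum_append,
      List.sum_cons, Fml.posOcc]
    omega
  case andIntro =>
    obtain ⟨l₁, l₂, F, G, -, hP, hC, -⟩ := h
    simp only [Cirquent.poolPosOcc, hP, hC, List.map_append, List.map_cons, List.sum_append,
      List.sum_cons, Fml.posOcc]
    omega

theorem groups_length_le_of_unRel {r : RuleName} {P C : Cirquent} (hr : r ≠ .dupDown)
    (h : unRel r P C) : C.groups.length ≤ P.groups.length := by
  cases r <;> simp only [unRel] at h
  case dupDown => exact absurd rfl hr
  case ofExch | orIntro =>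
    obtain ⟨_, _, _, _, _, _, hg⟩ := h
    simp [hg]
  case poolWeak =>
    obtain ⟨_, _, _, _, _, hg⟩ := h
    simp [hg]
  case ogExch =>
    obtain ⟨_, _, _, _, _, hP, hC⟩ := h
    simp [hP, hC]
  case dupUp =>
    obtain ⟨_, _, _, _, hP, hC⟩ := h
    simp [hP, hC]
  case ogWeak =>
    obtain ⟨_, _, _, _, _, _, _, hP, hC⟩ := h
    simp [hP, hC]
  case andIntro =>
    obtain ⟨_, _, _, _, _, _, _, hm, hg⟩ := h
    simpa [hg] using hm.length_le

theorem PTree.concl_mem_cirquents (p : PTree) : p.concl ∈ p.cirquents := by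
  cases p <;> simp [PTree.concl, PTree.cirquents]

theorem PTree.poolPosOcc_le_concl {p : PTree} (hv : p.Valid) :
    ∀ C ∈ p.cirquents, C.poolPosOcc ≤ p.concl.poolPosOcc := by
  induction p with
  | leaf => simp [PTree.cirquents, PTree.concl]
  | un C r q ih =>
    obtain ⟨hvq, hrel⟩ := hv
    simp only [PTree.cirquents, PTree.concl, List.forall_mem_cons]
    exact ⟨le_rfl, fun D hD => (ih hvq D hD).trans (poolPosOcc_le_of_unRel hrel)⟩
  | bin C r q₁ q₂ ih₁ ih₂ =>
    obtain ⟨hv₁, hv₂, -, hpool, -⟩ := hv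
    have hC : C.poolPosOcc = q₁.concl.poolPosOcc + q₂.concl.poolPosOcc := by
      simp [Cirquent.poolPosOcc, hpool]
    simp only [PTree.cirquents, PTree.concl, List.forall_mem_cons, List.mem_append]
    refine ⟨le_rfl, fun D hD => ?_⟩
    rcases hD with hD | hD
    · have := ih₁ hv₁ D hD; omega
    · have := ih₂ hv₂ D hD; omega

theorem PTree.groups_length_le_poolPosOcc {p : PTree} (hv : p.Valid)
    (hd : p.count .dupDown = 0) : ∀ C ∈ p.cirquents, C.groups.length ≤ C.poolPosOcc := by
  induction p with
  | leaf C r =>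
    intro D hD
    rw [PTree.cirquents, List.mem_singleton] at hD
    subst hD
    rcases hv with ⟨-, rfl⟩ | ⟨-, F, rfl⟩
    · simp [emptyCirquent, Cirquent.poolPosOcc]
    · simpa [idCirquent, Cirquent.poolPosOcc, add_comm] using
        F.one_le_posOcc_add_posOcc_negate
  | un C r q ih =>
    obtain ⟨hvq, hrel⟩ := hv
    obtain ⟨hr, hdq⟩ : r ≠ .dupDown ∧ q.count .dupDown = 0 := by
      simpa [PTree.count] using hd
    have ih := ih hvq hdq
    simp only [PTree.cirquents, List.forall_mem_cons]
    refine ⟨?_, ih⟩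
    calc C.groups.length ≤ q.concl.groups.length := groups_length_le_of_unRel hr hrel
      _ ≤ q.concl.poolPosOcc := ih _ q.concl_mem_cirquents
      _ ≤ C.poolPosOcc := poolPosOcc_le_of_unRel hrel
  | bin C r q₁ q₂ ih₁ ih₂ =>
    obtain ⟨hv₁, hv₂, -, hpool, hgroups⟩ := hv
    obtain ⟨hd₁, hd₂⟩ : q₁.count .dupDown = 0 ∧ q₂.count .dupDown = 0 := by
      simp only [PTree.count] at hd; omega
    have ih₁ := ih₁ hv₁ hd₁
    have ih₂ := ih₂ hv₂ hd₂
    have h₁ := ih₁ _ q₁.concl_mem_cirquents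
    have h₂ := ih₂ _ q₂.concl_mem_cirquents
    simp only [PTree.cirquents, List.forall_mem_cons, List.mem_append]
    refine ⟨?_, fun D hD => hD.elim (ih₁ D) (ih₂ D)⟩
    simp only [Cirquent.poolPosOcc, hpool, hgroups, List.map_append, List.sum_append,
      List.length_append, List.length_map] at h₁ h₂ ⊢
    omega

end CirquentCalc

theorem cl5m_ogroup_bound_general (F : Fml) (n : ℕ) (hn : n = F.posOcc)
    (p : PTree) (hv : p.Valid) (hd : DupFree p) (hc : p.concl = fmlCirquent F) :
    ∀ C ∈ p.cirquents, C.groups.length ≤ n := by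
  intro C hC
  calc C.groups.length ≤ C.poolPosOcc := p.groups_length_le_poolPosOcc hv hd.1 C hC
    _ ≤ p.concl.poolPosOcc := p.poolPosOcc_le_concl hv C hC
    _ = n := by simp [hc, fmlCirquent, Cirquent.poolPosOcc, hn]

/-- If F is provable in CL5⁻ and has n positive occurrences of atoms,
then no CL5⁻ proof of F contains a cirquent with more than n ogroups. -/
theorem cl5m_ogroup_bound (F : Fml) (n : ℕ) (hn : n = F.posOcc) (hF : ProvesCL5m F)
    (p : PTree) (hv : p.Valid) (hd : DupFree p) (hc : p.concl = fmlCirquent F) :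
    ∀ C ∈ p.cirquents, C.groups.length ≤ n :=
  cl5m_ogroup_bound_general F n hn p hv hd hc
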